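/- Faithfully flat descent of saturatedness: if R' is a faithfully flat R-algebra and A ⊗_R R' is saturated in B ⊗_R R' over R' (i.e., (A⊗_R R')*_{B⊗_R R',R'} equals the image of A ⊗_R R'), then A is saturated in B over R, i.e., A*_{B,R} = g(A). -/

import Mathlib

/-! Base change along `b ↦ b ⊗ 1` carries `ker (B ⊗[R] B → B ⊗[A] B)` into the corresponding
kernel over `R'`, and with it every equation of integral dependence of `x ⊗ 1 - 1 ⊗ x`. So
`x ∈ A*_{B,R}` gives `x ⊗ 1 ∈ (A ⊗ R')*_{B ⊗ R', R'}`, which by hypothesis is the image of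
`A ⊗ R'`. Thus the class of `x` in `B / g(A)` vanishes after tensoring with `R'`, and faithful
flatness forces it to vanish already. -/

open TensorProduct

/-- Integral closure of an ideal: `x` satisfies an equation of integral dependence over `I`. -/
def Ideal.intClosure {S : Type*} [CommRing S] (I : Ideal S) : Set S :=
  {x | ∃ n : ℕ, 0 < n ∧ ∃ a : ℕ → S, (∀ i ∈ Finset.Icc 1 n, a i ∈ I ^ i) ∧
      x ^ n + ∑ i ∈ Finset.Icc 1 n, a i * x ^ (n - i) = 0}

namespace Ideal

variable {S T : Type*} [CommRing S] [CommRing T]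

theorem subset_intClosure (I : Ideal S) : (I : Set S) ⊆ I.intClosure := by
  intro x hx
  refine ⟨1, one_pos, fun _ => -x, fun i hi => ?_, by simp⟩
  obtain rfl : i = 1 := by simpa using hi
  simpa using I.neg_mem hx

theorem map_mem_intClosure (f : S →+* T) {I : Ideal S} {J : Ideal T} (hIJ : I.map f ≤ J)
    {x : S} (hx : x ∈ I.intClosure) : f x ∈ J.intClosure := by
  obtain ⟨n, hn, a, ha, heq⟩ := hx
  refine ⟨n, hn, fun i => f (a i), fun i hi => ?_, ?_⟩
  · exact (Ideal.map_pow f I i ▸ pow_right_mono hIJ i) (mem_map_of_mem f (ha i hi))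
  · simpa using congrArg f heq

end Ideal

theorem Module.FaithfullyFlat.mem_range_of_tmul_one_mem_range_rTensor
    {R M N : Type*} (R' : Type*) [CommRing R] [CommRing R'] [Algebra R R']
    [Module.FaithfullyFlat R R'] [AddCommGroup M] [Module R M] [AddCommGroup N] [Module R N]
    (g : M →ₗ[R] N) {x : N} (hx : x ⊗ₜ[R] (1 : R') ∈ LinearMap.range (g.rTensor R')) :
    x ∈ LinearMap.range g := by
  obtain ⟨y, hy⟩ := hx
  have hπx : (LinearMap.range g).mkQ x ⊗ₜ[R] (1 : R') = 0 := by
    rw [← LinearMap.rTensor_tmul, ← hy, ← LinearMap.rTensor_comp_apply, LinearMap.range_mkQ_comp,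
      LinearMap.rTensor_zero, LinearMap.zero_apply]
  rw [← Submodule.ker_mkQ (LinearMap.range g), LinearMap.mem_ker]
  apply Module.FaithfullyFlat.tensorProduct_mk_injective (A := R) (B := R')
  simpa using congrArg (TensorProduct.comm R _ R') hπx

variable (R A B : Type*) [CommRing R] [CommRing A] [CommRing B]
  [Algebra R A] [Algebra R B] [Algebra A B] [IsScalarTower R A B]

/-- The diagonal map `b ↦ b ⊗ 1 - 1 ⊗ b`. -/
noncomputable def lipDelta (b : B) : B ⊗[R] B := b ⊗ₜ[R] 1 - 1 ⊗ₜ[R] b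

/-- The canonical morphism `B ⊗[R] B → B ⊗[A] B`. -/
noncomputable def lipPhi : B ⊗[R] B →ₐ[R] B ⊗[A] B :=
  Algebra.TensorProduct.lift
    ((Algebra.TensorProduct.includeLeft : B →ₐ[A] B ⊗[A] B).restrictScalars R)
    ((Algebra.TensorProduct.includeRight : B →ₐ[A] B ⊗[A] B).restrictScalars R)
    (fun _ _ => Commute.all _ _)

@[simp]
theorem lipPhi_tmul (b₁ b₂ : B) : lipPhi R A B (b₁ ⊗ₜ[R] b₂) = b₁ ⊗ₜ[A] b₂ := by
  simp [lipPhi]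

/-- The relative Lipschitz saturation of `A` in `B` over `R`. -/
noncomputable def lipSat : Set B :=
  {x | lipDelta R B x ∈ (RingHom.ker (lipPhi R A B)).intClosure}

theorem range_algebraMap_subset_lipSat : Set.range (algebraMap A B) ⊆ lipSat R A B := by
  rintro _ ⟨a, rfl⟩
  apply Ideal.subset_intClosure
  rw [SetLike.mem_coe, RingHom.mem_ker, lipDelta, map_sub, lipPhi_tmul, lipPhi_tmul,
    Algebra.algebraMap_eq_smul_one, smul_tmul, sub_self]

section Functoriality

variable {R A B} {R' A' B' : Type*} [CommRing R'] [CommRing A'] [CommRing B']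
  [Algebra R' A'] [Algebra R' B'] [Algebra A' B'] [IsScalarTower R' A' B']
  [Algebra R R'] [Algebra R B'] [IsScalarTower R R' B']

noncomputable def lipTensorMap (f : B →ₐ[R] B') : B ⊗[R] B →ₐ[R] B' ⊗[R'] B' :=
  Algebra.TensorProduct.lift (Algebra.TensorProduct.includeLeft.comp f)
    ((Algebra.TensorProduct.includeRight.restrictScalars R).comp f) (fun _ _ => Commute.all _ _)

@[simp]
theorem lipTensorMap_tmul (f : B →ₐ[R] B') (b₁ b₂ : B) :
    lipTensorMap (R' := R') f (b₁ ⊗ₜ[R] b₂) = f b₁ ⊗ₜ[R'] f b₂ := by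
  simp [lipTensorMap]

theorem lipTensorMap_lipDelta (f : B →ₐ[R] B') (b : B) :
    lipTensorMap (R' := R') f (lipDelta R B b) = lipDelta R' B' (f b) := by
  simp [lipDelta]

theorem map_ker_lipPhi_le (f : B →ₐ[R] B')
    (hf : ∀ a : A, f (algebraMap A B a) ∈ Set.range (algebraMap A' B')) :
    (RingHom.ker (lipPhi R A B)).map (lipTensorMap f) ≤ RingHom.ker (lipPhi R' A' B') := by
  have hbal (a : A) (b₁ b₂ : B) : f (a • b₁) ⊗ₜ[A'] f b₂ = f b₁ ⊗ₜ[A'] f (a • b₂) := by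
    obtain ⟨a', ha'⟩ := hf a
    have hsmul (b : B) : f (a • b) = a' • f b := by
      rw [Algebra.smul_def, map_mul, ← ha', Algebra.smul_def]
    rw [hsmul, hsmul, smul_tmul]
  let G : B ⊗[A] B →+ B' ⊗[A'] B' := liftAddHom
    (AddMonoidHom.mk' (fun b₁ => AddMonoidHom.mk' (fun b₂ => f b₁ ⊗ₜ[A'] f b₂)
      (fun _ _ => by rw [map_add, tmul_add]))
      (fun _ _ => by ext; simp [add_tmul])) hbal
  have hG (z : B ⊗[R] B) : lipPhi R' A' B' (lipTensorMap f z) = G (lipPhi R A B z) := by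
    induction z using TensorProduct.induction_on with
    | zero => simp
    | tmul b₁ b₂ => simp only [lipTensorMap_tmul, lipPhi_tmul]; rfl
    | add u v hu hv => simp only [map_add, hu, hv]
  rw [Ideal.map_le_iff_le_comap]
  intro z hz
  rw [RingHom.mem_ker] at hz
  rw [Ideal.mem_comap, RingHom.mem_ker, hG, hz, map_zero]

theorem map_mem_lipSat (f : B →ₐ[R] B')
    (hf : ∀ a : A, f (algebraMap A B a) ∈ Set.range (algebraMap A' B')) {x : B}
    (hx : x ∈ lipSat R A B) : f x ∈ lipSat R' A' B' := by
  have :=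
    Ideal.map_mem_intClosure (lipTensorMap (R' := R') f).toRingHom (map_ker_lipPhi_le f hf) hx
  rwa [AlgHom.toRingHom_eq_coe, RingHom.coe_coe, lipTensorMap_lipDelta] at this

end Functoriality

attribute [local instance] Algebra.TensorProduct.rightAlgebra

/-- Faithfully flat descent of saturatedness: if `R'` is a faithfully flat
`R`-algebra and `A ⊗_R R'` is saturated in `B ⊗_R R'` over `R'`, then `A` is
saturated in `B` over `R`, i.e. `A*_{B,R} = g(A)`. -/
theorem lipSat_faithfully_flat_descent (R' : Type*) [CommRing R'] [Algebra R R']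
    [Module.FaithfullyFlat R R']
    [Algebra (A ⊗[R] R') (B ⊗[R] R')]
    (halg : algebraMap (A ⊗[R] R') (B ⊗[R] R') =
      (Algebra.TensorProduct.map (IsScalarTower.toAlgHom R A B)
        (AlgHom.id R R')).toRingHom)
    (htower : ∀ r : R', algebraMap R' (B ⊗[R] R') r =
      algebraMap (A ⊗[R] R') (B ⊗[R] R') (algebraMap R' (A ⊗[R] R') r))
    (hsat : @lipSat R' (A ⊗[R] R') (B ⊗[R] R') _ _ _ _ _ _
        (IsScalarTower.of_algebraMap_eq htower) =
      Set.range (algebraMap (A ⊗[R] R') (B ⊗[R] R'))) :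
    lipSat R A B = Set.range (algebraMap A B) := by
  have : IsScalarTower R' (A ⊗[R] R') (B ⊗[R] R') := .of_algebraMap_eq htower
  have hmap (z : A ⊗[R] R') : algebraMap (A ⊗[R] R') (B ⊗[R] R') z =
      (IsScalarTower.toAlgHom R A B).toLinearMap.rTensor R' z := by
    rw [halg]
    induction z using TensorProduct.induction_on with
    | zero => simp
    | tmul a r => simp
    | add u v hu hv => simp only [map_add, hu, hv]
  refine (range_algebraMap_subset_lipSat R A B).antisymm' fun x hx => ?_
  have hf (a : A) : (Algebra.TensorProduct.includeLeft : B →ₐ[R] B ⊗[R] R') (algebraMap A B a) ∈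
      Set.range (algebraMap (A ⊗[R] R') (B ⊗[R] R')) := ⟨a ⊗ₜ 1, by simp [hmap]⟩
  obtain ⟨y, hy⟩ : x ⊗ₜ[R] (1 : R') ∈ Set.range (algebraMap (A ⊗[R] R') (B ⊗[R] R')) :=
    hsat ▸ map_mem_lipSat (R' := R') _ hf hx
  exact Module.FaithfullyFlat.mem_range_of_tmul_one_mem_range_rTensor R' _
    ⟨y, (hmap y).symm.trans hy⟩
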